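/- Let μ be an element of M and let γ ∈ R be a root with ⟨γ, μ⟩ ≥ 2 (so that μ = γ∨). Then γ is a maximal positive root: γ ∈ R₊, γ is dominant as an element of V (i.e. ⟨γ, α∨⟩ ≥ 0 for all α ∈ R₊), and for every root α lying in the same irreducible component of R as γ one has γ − α ∈ ℕΔ (the ℕ-span of the simple roots); that is, γ is the highest root of its irreducible component. -/

import Mathlib

open scoped BigOperators Classical

noncomputable section

/-- Data of a finite crystallographic root system in a pair of vector spaces `V`, `V'`
(in perfect duality via `pair`), with a chosen base `Δ` and a cocharacter lattice `X`. -/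
structure RootSystemData (V V' : Type) [AddCommGroup V] [Module ℝ V]
    [FiniteDimensional ℝ V] [AddCommGroup V'] [Module ℝ V'] [FiniteDimensional ℝ V'] where
  /-- The canonical pairing between `V` and `V'`. -/
  pair : V →ₗ[ℝ] V' →ₗ[ℝ] ℝ
  /-- The (finite) set of roots. -/
  R : Finset V
  /-- The coroot attached to a root. -/
  coroot : V → V'
  root_ne_zero : ∀ α ∈ R, α ≠ (0 : V)
  neg_mem : ∀ α ∈ R, -α ∈ R
  coroot_neg : ∀ α ∈ R, coroot (-α) = -coroot α
  pair_self_eq_two : ∀ α ∈ R, pair α (coroot α) = 2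
  crystallographic : ∀ α ∈ R, ∀ β ∈ R, ∃ n : ℤ, pair α (coroot β) = (n : ℝ)
  reflect_root_mem : ∀ α ∈ R, ∀ β ∈ R, β - pair β (coroot α) • α ∈ R
  reflect_coroot_mem : ∀ α ∈ R, ∀ β ∈ R,
    coroot β - pair α (coroot β) • coroot α ∈ coroot '' R
  /-- The chosen base (set of simple roots). -/
  Δ : Finset V
  base_subset : Δ ⊆ R
  base_indep : LinearIndependent ℝ (fun a : (Δ : Set V) => (a : V))
  base_generates : ∀ α ∈ R,
    α ∈ AddSubmonoid.closure (Δ : Set V) ∨ -α ∈ AddSubmonoid.closure (Δ : Set V)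
  /-- The lattice `X∨`. -/
  X : AddSubgroup V'
  coroot_mem_X : ∀ α ∈ R, coroot α ∈ X
  X_le_span : (X : Set V') ⊆ (Submodule.span ℝ (coroot '' (R : Set V)) : Set V')
  pair_X_int : ∀ α ∈ R, ∀ x ∈ X, ∃ n : ℤ, pair α x = (n : ℝ)

namespace RootSystemData

variable {V V' : Type} [AddCommGroup V] [Module ℝ V] [FiniteDimensional ℝ V]
  [AddCommGroup V'] [Module ℝ V'] [FiniteDimensional ℝ V']
  (D : RootSystemData V V')

/-- The set `R₊` of positive roots: roots which are `ℕ`-linear combinations of the base. -/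
def Rpos : Finset V := D.R.filter fun α => α ∈ AddSubmonoid.closure (D.Δ : Set V)

/-- The coroot lattice `Q∨`. -/
def Qc : AddSubgroup V' := AddSubgroup.closure (D.coroot '' (D.R : Set V))

/-- The positive cone `Q∨₊` generated by the coroots of the positive roots. -/
def Qpos : AddSubmonoid V' := AddSubmonoid.closure (D.coroot '' (D.Rpos : Set V))

/-- The dominance order: `ν ≤ λ` iff `λ - ν ∈ Q∨₊`. -/
def leQ (ν lam : V') : Prop := lam - ν ∈ D.Qpos

/-- Dominance: `ν` is dominant iff `⟨α, ν⟩ ≥ 0` for every positive root `α`. -/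
def Dominant (ν : V') : Prop := ∀ α ∈ D.Rpos, 0 ≤ D.pair α ν

/-- The set `X∨₊` of dominant elements of the lattice. -/
def Xplus : Set V' := {x | x ∈ D.X ∧ D.Dominant x}

/-- The set `M` of minimal elements of `X∨₊ \ {0}` for the dominance order. -/
def MSet : Set V' :=
  {μ | μ ∈ D.Xplus ∧ μ ≠ 0 ∧ ∀ ν ∈ D.Xplus, ν ≠ 0 → D.leQ ν μ → ν = μ}

/-- The reflection on `V` attached to a root `α`. -/
def reflV (α : V) (hα : α ∈ D.R) : V ≃ₗ[ℝ] V :=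
  Module.reflection (show D.pair.flip (D.coroot α) α = 2 from D.pair_self_eq_two α hα)

/-- The reflection on `V'` attached to a root `α`. -/
def reflV' (α : V) (hα : α ∈ D.R) : V' ≃ₗ[ℝ] V' :=
  Module.reflection (show D.pair α (D.coroot α) = 2 from D.pair_self_eq_two α hα)

/-- The Weyl group `W`, acting simultaneously on `V` (first component)
and on `V'` (second component); it is generated by the pairs of reflections
attached to the roots. -/
def weyl : Subgroup ((V ≃ₗ[ℝ] V) × (V' ≃ₗ[ℝ] V')) :=
  Subgroup.closure {g | ∃ α, ∃ hα : α ∈ D.R, g = (D.reflV α hα, D.reflV' α hα)}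

/-- The orbit `Wμ` of `μ ∈ V'` under the Weyl group. -/
def Worbit (μ : V') : Set V' := {ν | ∃ g ∈ D.weyl, ν = g.2 μ}

/-- The set `Ω(λ) = {ν ∈ X∨ : wν ≤ λ for all w ∈ W}`. -/
def Omega (lam : V') : Set V' :=
  {ν | ν ∈ D.X ∧ ∀ g ∈ D.weyl, D.leQ (g.2 ν) lam}

/-- Two roots are linked when they are non-orthogonal. -/
def Linked (α β : V) : Prop := α ∈ D.R ∧ β ∈ D.R ∧ D.pair α (D.coroot β) ≠ 0

/-- Two roots lie in the same irreducible component iff they are connected by a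
chain of non-orthogonal roots. -/
def SameComponent (α β : V) : Prop := Relation.EqvGen D.Linked α β

/-- The half-sum `ρ` of the positive roots. -/
def rho : V := (2 : ℝ)⁻¹ • ∑ α ∈ D.Rpos, α

/-- A `W`-invariant inner product on `V'`. -/
structure WInvInner where
  form : V' →ₗ[ℝ] V' →ₗ[ℝ] ℝ
  symm : ∀ x y, form x y = form y x
  posdef : ∀ x, x ≠ 0 → 0 < form x x
  invariant : ∀ g ∈ D.weyl, ∀ x y, form (g.2 x) (g.2 y) = form x y

/-- `β` is a root whose coroot is short: for every `W`-invariant inner product `B` on `V'`,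
`B(β∨, β∨) ≤ B(α∨, α∨)` for every root `α` in the same irreducible component as `β`. -/
def IsShortCoroot (β : V) : Prop :=
  β ∈ D.R ∧ ∀ B : D.WInvInner, ∀ α ∈ D.R, D.SameComponent α β →
    B.form (D.coroot β) (D.coroot β) ≤ B.form (D.coroot α) (D.coroot α)

end RootSystemData

/-!
Put `ν₀ = μ - γ∨ ≤ μ`. While `ν ≤ μ` is not dominant, a positive coroot `x∨` with `⟨x, ν⟩ ≤ -1`
can be added without leaving `ν ≤ μ` (an exchange at a simple root on which `ν` is negative).
This never increases the `W`-invariant norm `‖ν‖² = ∑_{α ∈ R} ⟨α, ν⟩²` and raises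
`⟨ρ, ν⟩ ≤ (|R₊| + ‖ν‖²) / 4` by at least `1`, so it ends at a dominant `λ ≤ μ` with
`‖λ‖² ≤ ‖ν₀‖² < ‖μ‖²`. Minimality of `μ` forces `λ = 0`; then `γ∨ - μ ∈ Q∨₊`, and the same norm
computation gives `μ = γ∨`. Hence `γ` is the only root `z` with `⟨z, γ∨⟩ ≥ 2`, which settles
`γ - z ∈ ℕΔ` for the roots `z` with `⟨z, γ∨⟩ ≠ 0`, and, via `z ± y`, for the roots `z ⊥ γ∨` linked
to such a `y`. Every root of the component of `γ` is of one of these kinds: along a chain of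
linked roots a reflection restores the link to a root not orthogonal to `γ∨`.
-/

section SqForm

variable {ι M : Type*} [AddCommGroup M] [Module ℝ M] (s : Finset ι) (f : ι → M →ₗ[ℝ] ℝ)

def sqForm : M →ₗ[ℝ] M →ₗ[ℝ] ℝ := ∑ i ∈ s, (LinearMap.mul ℝ ℝ).compl₁₂ (f i) (f i)

lemma sqForm_apply (x y : M) : sqForm s f x y = ∑ i ∈ s, f i x * f i y := by
  simp [sqForm, LinearMap.sum_apply]

lemma sqForm_comm (x y : M) : sqForm s f x y = sqForm s f y x := by
  simp only [sqForm_apply, mul_comm]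

lemma sqForm_self_nonneg (x : M) : 0 ≤ sqForm s f x x := by
  rw [sqForm_apply]
  exact Finset.sum_nonneg fun i _ => mul_self_nonneg (f i x)

lemma mul_self_le_sqForm_self {i : ι} (hi : i ∈ s) (x : M) : f i x * f i x ≤ sqForm s f x x := by
  rw [sqForm_apply]
  exact Finset.single_le_sum (f := fun i => f i x * f i x) (fun i _ => mul_self_nonneg (f i x)) hi

lemma apply_eq_zero_of_sqForm_self_eq_zero {x : M} (h : sqForm s f x x = 0) {i : ι} (hi : i ∈ s) :
    f i x = 0 :=
  mul_self_eq_zero.mp (le_antisymm (h ▸ mul_self_le_sqForm_self s f hi x) (mul_self_nonneg _))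

lemma sqForm_mul_self_le (x y : M) :
    sqForm s f x y * sqForm s f x y ≤ sqForm s f x x * sqForm s f y y := by
  have := Finset.sum_mul_sq_le_sq_mul_sq s (f · x) (f · y)
  simp only [sq] at this
  simpa only [sqForm_apply] using this

variable {s f} in
lemma sqForm_apply_apply_of_involution {T : M → M} {g : ι → ι} (hg : ∀ i ∈ s, g i ∈ s)
    (hgg : ∀ i ∈ s, g (g i) = i) (hT : ∀ i ∈ s, ∀ x, f i (T x) = f (g i) x) (x y : M) :
    sqForm s f (T x) (T y) = sqForm s f x y := by
  simp only [sqForm_apply]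
  exact Finset.sum_nbij' g g hg hg hgg hgg fun i hi => by rw [hT i hi, hT i hi]

end SqForm

lemma dual_mul_eq_of_reflection_invariant {M : Type*} [AddCommGroup M] [Module ℝ M]
    {B : M →ₗ[ℝ] M →ₗ[ℝ] ℝ} {a : M} {φ : Module.Dual ℝ M} (h : φ a = 2)
    (hB : ∀ u v, B (Module.reflection h u) (Module.reflection h v) = B u v) (u : M) :
    φ u * B a a = 2 * B u a := by
  have := hB u a
  rw [Module.reflection_apply_self, Module.reflection_apply] at this
  simp only [map_sub, map_smul, map_neg, LinearMap.sub_apply, LinearMap.smul_apply,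
    smul_eq_mul] at this
  linarith

lemma eq_zero_of_forall_add_smul_mem {V : Type*} [AddCommGroup V] [Module ℝ V] {s : Finset V}
    {a v : V} (h : ∀ n : ℕ, a + (n : ℝ) • v ∈ s) : v = 0 := by
  obtain ⟨m, n, hmn, heq⟩ := Set.Finite.exists_lt_map_eq_of_forall_mem
    (f := fun n : ℕ => a + (n : ℝ) • v) h s.finite_toSet
  have hsub : ((n : ℝ) - m) • v = 0 := by
    rw [sub_smul, sub_eq_zero]
    exact (add_left_cancel heq).symm
  refine (smul_eq_zero.mp hsub).resolve_left (sub_ne_zero.mpr ?_)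
  exact_mod_cast hmn.ne'

lemma one_le_of_isInt_of_pos {r : ℝ} (h : ∃ n : ℤ, r = n) (hr : 0 < r) : 1 ≤ r := by
  obtain ⟨n, rfl⟩ := h
  exact_mod_cast (show (0 : ℤ) < n by exact_mod_cast hr)

lemma le_neg_one_of_isInt_of_neg {r : ℝ} (h : ∃ n : ℤ, r = n) (hr : r < 0) : r ≤ -1 := by
  obtain ⟨n, rfl⟩ := h
  have : n < 0 := by exact_mod_cast hr
  exact_mod_cast (show n ≤ -1 by omega)

lemma Module.Basis.repr_nonneg_of_mem_closure {ι M : Type*} [AddCommGroup M] [Module ℝ M]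
    {b : Module.Basis ι ℝ M} {s : Set M} (hs : s ⊆ Set.range b) {x : M}
    (hx : x ∈ AddSubmonoid.closure s) (i : ι) : 0 ≤ b.repr x i := by
  induction hx using AddSubmonoid.closure_induction with
  | mem y hy =>
    obtain ⟨j, rfl⟩ := hs hy
    rw [b.repr_self, Finsupp.single_apply]
    split_ifs <;> norm_num
  | zero => simp
  | add y z _ _ hy hz => simpa using add_nonneg hy hz

lemma AddSubmonoid.intCast_smul_mem {M : Type*} [AddCommGroup M] [Module ℝ M]
    (S : AddSubmonoid M) {x : M} (hx : x ∈ S) {n : ℤ} (hn : 0 ≤ n) : (n : ℝ) • x ∈ S := by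
  lift n to ℕ using hn
  rw [Int.cast_natCast, Nat.cast_smul_eq_nsmul]
  exact nsmul_mem hx n

namespace RootSystemData

variable {V V' : Type} [AddCommGroup V] [Module ℝ V] [FiniteDimensional ℝ V]
  [AddCommGroup V'] [Module ℝ V'] [FiniteDimensional ℝ V']
  (D : RootSystemData V V') {α β γ δ x z : V} {μ ν : V'}

lemma reflV_apply (hα : α ∈ D.R) (u : V) :
    D.reflV α hα u = u - D.pair u (D.coroot α) • α := by
  simp [reflV, Module.reflection_apply]

lemma reflV'_apply (hα : α ∈ D.R) (y : V') :
    D.reflV' α hα y = y - D.pair α y • D.coroot α := by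
  simp [reflV', Module.reflection_apply]

lemma reflV_mem (hα : α ∈ D.R) (hδ : δ ∈ D.R) : D.reflV α hα δ ∈ D.R := by
  rw [reflV_apply]
  exact D.reflect_root_mem α hα δ hδ

lemma reflV_reflV (hα : α ∈ D.R) (u : V) : D.reflV α hα (D.reflV α hα u) = u :=
  Module.involutive_reflection _ u

lemma pair_reflV' (hα : α ∈ D.R) (u : V) (y : V') :
    D.pair u (D.reflV' α hα y) = D.pair (D.reflV α hα u) y := by
  simp only [reflV_apply, reflV'_apply, map_sub, map_smul, LinearMap.sub_apply,
    LinearMap.smul_apply, smul_eq_mul]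
  ring

abbrev corootForm : V' →ₗ[ℝ] V' →ₗ[ℝ] ℝ := sqForm D.R D.pair

/-- Indexed by the set of coroots rather than by `R`, so that the coroot reflections permute the
index set. -/
abbrev rootForm : V →ₗ[ℝ] V →ₗ[ℝ] ℝ := sqForm (D.R.image D.coroot) D.pair.flip

lemma corootForm_comm (x y : V') : D.corootForm x y = D.corootForm y x := sqForm_comm _ _ x y

lemma corootForm_reflV' (hα : α ∈ D.R) (x y : V') :
    D.corootForm (D.reflV' α hα x) (D.reflV' α hα y) = D.corootForm x y :=
  sqForm_apply_apply_of_involution (fun _ hδ => D.reflV_mem hα hδ)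
    (fun δ _ => D.reflV_reflV hα δ) (fun δ _ x => D.pair_reflV' hα δ x) x y

lemma rootForm_reflV (hα : α ∈ D.R) (u v : V) :
    D.rootForm (D.reflV α hα u) (D.reflV α hα v) = D.rootForm u v := by
  refine sqForm_apply_apply_of_involution (g := D.reflV' α hα) ?_
    (fun _ _ => Module.involutive_reflection _ _) (fun c _ u => (D.pair_reflV' hα u c).symm) u v
  intro c hc
  obtain ⟨δ, hδ, rfl⟩ := Finset.mem_image.mp hc
  obtain ⟨ε, hε, hεδ⟩ := D.reflect_coroot_mem α hα δ hδ
  exact Finset.mem_image.mpr ⟨ε, hε, by rw [hεδ, reflV'_apply]⟩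

lemma pair_mul_corootForm (hα : α ∈ D.R) (y : V') :
    D.pair α y * D.corootForm (D.coroot α) (D.coroot α) = 2 * D.corootForm y (D.coroot α) :=
  dual_mul_eq_of_reflection_invariant _ (D.corootForm_reflV' hα) y

lemma pair_coroot_mul_rootForm (hα : α ∈ D.R) (u : V) :
    D.pair u (D.coroot α) * D.rootForm α α = 2 * D.rootForm u α :=
  dual_mul_eq_of_reflection_invariant _ (D.rootForm_reflV hα) u

lemma four_le_corootForm_coroot (hα : α ∈ D.R) :
    4 ≤ D.corootForm (D.coroot α) (D.coroot α) := by
  have := mul_self_le_sqForm_self D.R D.pair hα (D.coroot α)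
  rw [D.pair_self_eq_two α hα] at this
  linarith

lemma four_le_rootForm (hα : α ∈ D.R) : 4 ≤ D.rootForm α α := by
  have := mul_self_le_sqForm_self _ D.pair.flip (Finset.mem_image_of_mem D.coroot hα) α
  rw [LinearMap.flip_apply, D.pair_self_eq_two α hα] at this
  linarith

lemma pair_coroot_mul_corootForm_comm (hα : α ∈ D.R) (hβ : β ∈ D.R) :
    D.pair α (D.coroot β) * D.corootForm (D.coroot α) (D.coroot α)
      = D.pair β (D.coroot α) * D.corootForm (D.coroot β) (D.coroot β) := by
  rw [D.pair_mul_corootForm hα, D.pair_mul_corootForm hβ, corootForm_comm]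

lemma pair_coroot_pos_comm (hα : α ∈ D.R) (hβ : β ∈ D.R) (h : 0 < D.pair α (D.coroot β)) :
    0 < D.pair β (D.coroot α) := by
  have := D.pair_coroot_mul_corootForm_comm hα hβ
  nlinarith [D.four_le_corootForm_coroot hα, D.four_le_corootForm_coroot hβ]

lemma pair_coroot_nonneg_comm (hα : α ∈ D.R) (hβ : β ∈ D.R) (h : 0 ≤ D.pair α (D.coroot β)) :
    0 ≤ D.pair β (D.coroot α) := by
  have := D.pair_coroot_mul_corootForm_comm hα hβ
  nlinarith [D.four_le_corootForm_coroot hα, D.four_le_corootForm_coroot hβ]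

lemma pair_coroot_ne_zero_comm (hα : α ∈ D.R) (hβ : β ∈ D.R) (h : D.pair α (D.coroot β) ≠ 0) :
    D.pair β (D.coroot α) ≠ 0 := by
  intro h0
  have hcomm := D.pair_coroot_mul_corootForm_comm hα hβ
  rw [h0, zero_mul] at hcomm
  exact h ((mul_eq_zero.mp hcomm).resolve_right
    (ne_of_gt (by linarith [D.four_le_corootForm_coroot hα])))

lemma pair_coroot_mul_pair_coroot_le_four (hα : α ∈ D.R) (hβ : β ∈ D.R) :
    D.pair α (D.coroot β) * D.pair β (D.coroot α) ≤ 4 := by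
  have hα' := D.pair_mul_corootForm hα (D.coroot β)
  have hβ' := D.pair_mul_corootForm hβ (D.coroot α)
  have hcs : D.corootForm (D.coroot α) (D.coroot β) * D.corootForm (D.coroot α) (D.coroot β)
      ≤ D.corootForm (D.coroot α) (D.coroot α) * D.corootForm (D.coroot β) (D.coroot β) :=
    sqForm_mul_self_le _ _ _ _
  rw [corootForm_comm _ (D.coroot β)] at hα'
  have hA := D.four_le_corootForm_coroot hα
  have hB := D.four_le_corootForm_coroot hβ
  have hAB : 0 < D.corootForm (D.coroot α) (D.coroot α) * D.corootForm (D.coroot β) (D.coroot β) :=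
    by positivity
  refine le_of_mul_le_mul_right ?_ hAB
  calc _ = (D.pair α (D.coroot β) * D.corootForm (D.coroot α) (D.coroot α))
        * (D.pair β (D.coroot α) * D.corootForm (D.coroot β) (D.coroot β)) := by ring
    _ ≤ _ := by rw [hα', hβ']; linarith

lemma eq_of_forall_pair_coroot_eq (hα : α ∈ D.R) (hβ : β ∈ D.R)
    (h : ∀ x ∈ D.R, D.pair x (D.coroot α) = D.pair x (D.coroot β)) : α = β := by
  have hαα := D.pair_self_eq_two α hα
  have hβα : D.pair β (D.coroot α) = 2 := (h β hβ).trans (D.pair_self_eq_two β hβ)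
  obtain ⟨v, hv⟩ : ∃ v : V, v = (-2 : ℝ) • (α - β) := ⟨_, rfl⟩
  -- `s_β ∘ s_α` translates the roots `x` with `⟨x, α∨⟩ = 2` by `v`
  have hstep : ∀ x ∈ D.R, D.pair x (D.coroot α) = 2 →
      x + v ∈ D.R ∧ D.pair (x + v) (D.coroot α) = 2 := by
    intro x hx hxα
    have h1 := D.reflect_root_mem α hα x hx
    have h1β : D.pair (x - D.pair x (D.coroot α) • α) (D.coroot β) = -2 := by
      rw [← h _ h1, map_sub, map_smul, LinearMap.sub_apply, LinearMap.smul_apply, hxα, hαα]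
      norm_num
    have h2 := D.reflect_root_mem β hβ _ h1
    rw [h1β, hxα] at h2
    refine ⟨by convert h2 using 1; rw [hv]; module, ?_⟩
    simp only [hv, map_add, map_smul, map_sub, LinearMap.add_apply, LinearMap.smul_apply,
      LinearMap.sub_apply, smul_eq_mul, hxα, hαα, hβα]
    norm_num
  have hprog : ∀ n : ℕ, α + (n : ℝ) • v ∈ D.R ∧ D.pair (α + (n : ℝ) • v) (D.coroot α) = 2 := by
    intro n
    induction n with
    | zero => simpa using ⟨hα, hαα⟩
    | succ n ih =>
      rw [Nat.cast_succ, add_smul, one_smul, ← add_assoc]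
      exact hstep _ ih.1 ih.2
  have hv0 := eq_zero_of_forall_add_smul_mem fun n => (hprog n).1
  rw [hv, smul_eq_zero] at hv0
  exact sub_eq_zero.mp (hv0.resolve_left (by norm_num))

lemma coroot_injOn : Set.InjOn D.coroot D.R := fun α hα β hβ h =>
  D.eq_of_forall_pair_coroot_eq hα hβ fun x _ => by rw [h]

lemma eq_of_pair_coroot_eq_two (hα : α ∈ D.R) (hβ : β ∈ D.R)
    (hαβ : D.pair α (D.coroot β) = 2) (hβα : D.pair β (D.coroot α) = 2) : α = β := by
  have h1 := D.pair_mul_corootForm hα (D.coroot β)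
  have h2 := D.pair_mul_corootForm hβ (D.coroot α)
  rw [hαβ] at h1
  rw [hβα, corootForm_comm _ (D.coroot α)] at h2
  have hrad : D.corootForm (D.coroot α - D.coroot β) (D.coroot α - D.coroot β) = 0 := by
    simp only [map_sub, LinearMap.sub_apply, D.corootForm_comm (D.coroot α) (D.coroot β)]
    linarith
  refine D.eq_of_forall_pair_coroot_eq hα hβ fun x hx => ?_
  have := apply_eq_zero_of_sqForm_self_eq_zero _ _ hrad hx
  rw [map_sub] at this
  linarith

lemma pair_coroot_reflV (hα : α ∈ D.R) (hδ : δ ∈ D.R) (u : V) :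
    D.pair u (D.coroot (D.reflV α hα δ)) = D.pair (D.reflV α hα u) (D.coroot δ) := by
  have hη := D.pair_coroot_mul_rootForm (D.reflV_mem hα hδ) u
  have hδ' := D.pair_coroot_mul_rootForm hδ (D.reflV α hα u)
  rw [D.rootForm_reflV hα] at hη
  rw [← D.rootForm_reflV hα (D.reflV α hα u), D.reflV_reflV] at hδ'
  have := D.four_le_rootForm hδ
  exact mul_right_cancel₀ (by linarith) (hη.trans hδ'.symm)

lemma coroot_reflV (hα : α ∈ D.R) (hδ : δ ∈ D.R) :
    D.coroot (D.reflV α hα δ) = D.reflV' α hα (D.coroot δ) := by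
  obtain ⟨ε, hε, hεδ⟩ := D.reflect_coroot_mem α hα δ hδ
  rw [← reflV'_apply] at hεδ
  rw [← hεδ]
  congr 1
  refine D.eq_of_forall_pair_coroot_eq (D.reflV_mem hα hδ) hε fun x _ => ?_
  rw [D.pair_coroot_reflV hα hδ, hεδ, pair_reflV']

lemma sub_mem_of_pair_coroot_pos (hα : α ∈ D.R) (hβ : β ∈ D.R) (hne : α ≠ β)
    (hpos : 0 < D.pair α (D.coroot β)) : α - β ∈ D.R := by
  obtain ⟨m, hm⟩ := D.crystallographic α hα β hβ
  obtain ⟨n, hn⟩ := D.crystallographic β hβ α hα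
  have hm1 : 1 ≤ m := by exact_mod_cast hm ▸ one_le_of_isInt_of_pos ⟨m, hm⟩ hpos
  have hn1 : 1 ≤ n := by
    exact_mod_cast hn ▸ one_le_of_isInt_of_pos ⟨n, hn⟩ (D.pair_coroot_pos_comm hα hβ hpos)
  have hmn : m * n ≤ 4 := by
    exact_mod_cast hm ▸ hn ▸ D.pair_coroot_mul_pair_coroot_le_four hα hβ
  have hcases : m = 1 ∨ n = 1 ∨ (m = 2 ∧ n = 2) := by
    have : m ≤ 4 := by nlinarith
    have : n ≤ 4 := by nlinarith
    interval_cases m <;> interval_cases n <;> omega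
  rcases hcases with h | h | ⟨h, h'⟩
  · simpa [hm, h] using D.reflect_root_mem β hβ α hα
  · simpa [hn, h] using D.neg_mem _ (D.reflect_root_mem α hα β hβ)
  · exact absurd (D.eq_of_pair_coroot_eq_two hα hβ (by simp [hm, h]) (by simp [hn, h'])) hne

lemma add_mem_of_pair_coroot_neg (hα : α ∈ D.R) (hβ : β ∈ D.R) (hne : α ≠ -β)
    (hneg : D.pair α (D.coroot β) < 0) : α + β ∈ D.R := by
  have hpos : 0 < D.pair α (D.coroot (-β)) := by
    rw [D.coroot_neg β hβ, map_neg]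
    linarith
  simpa using D.sub_mem_of_pair_coroot_pos hα (D.neg_mem β hβ) hne hpos

lemma exists_basis_range_superset_base :
    ∃ (ι : Type) (b : Module.Basis ι ℝ V), (D.Δ : Set V) ⊆ Set.range b := by
  have hs : LinearIndepOn ℝ id (D.Δ : Set V) := D.base_indep
  exact ⟨_, Module.Basis.extend hs, (Module.Basis.range_extend hs).symm ▸ hs.subset_extend _⟩

lemma mem_Rpos : α ∈ D.Rpos ↔ α ∈ D.R ∧ α ∈ AddSubmonoid.closure (D.Δ : Set V) :=
  Finset.mem_filter

lemma mem_R_of_mem_Rpos (h : α ∈ D.Rpos) : α ∈ D.R := (D.mem_Rpos.mp h).1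

lemma mem_closure_of_mem_Rpos (h : α ∈ D.Rpos) : α ∈ AddSubmonoid.closure (D.Δ : Set V) :=
  (D.mem_Rpos.mp h).2

lemma mem_Rpos_or_neg_mem_Rpos (hα : α ∈ D.R) : α ∈ D.Rpos ∨ -α ∈ D.Rpos :=
  (D.base_generates α hα).imp (fun h => D.mem_Rpos.mpr ⟨hα, h⟩)
    (fun h => D.mem_Rpos.mpr ⟨D.neg_mem α hα, h⟩)

lemma mem_Rpos_of_mem_base (hβ : β ∈ D.Δ) : β ∈ D.Rpos :=
  D.mem_Rpos.mpr ⟨D.base_subset hβ, AddSubmonoid.subset_closure hβ⟩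

lemma mem_Rpos_of_pair_pos (hμ : D.Dominant μ) (hz : z ∈ D.R) (h : 0 < D.pair z μ) :
    z ∈ D.Rpos := by
  refine (D.mem_Rpos_or_neg_mem_Rpos hz).resolve_right fun hneg => ?_
  have := hμ _ hneg
  rw [map_neg, LinearMap.neg_apply] at this
  linarith

lemma mem_Rpos_of_repr_pos {ι : Type} {b : Module.Basis ι ℝ V} (hb : (D.Δ : Set V) ⊆ Set.range b)
    (hz : z ∈ D.R) {i : ι} (h : 0 < b.repr z i) : z ∈ D.Rpos := by
  refine (D.mem_Rpos_or_neg_mem_Rpos hz).resolve_right fun hneg => ?_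
  have := b.repr_nonneg_of_mem_closure hb (D.mem_closure_of_mem_Rpos hneg) i
  rw [map_neg, Finsupp.neg_apply] at this
  linarith

lemma neg_not_mem_Rpos (hx : x ∈ D.Rpos) : -x ∉ D.Rpos := by
  intro hneg
  obtain ⟨ι, b, hb⟩ := D.exists_basis_range_superset_base
  obtain ⟨i, hi⟩ : ∃ i, b.repr x i ≠ 0 := by
    by_contra! h
    exact D.root_ne_zero x (D.mem_R_of_mem_Rpos hx) (b.repr.injective (by ext i; simp [h]))
  have h1 := b.repr_nonneg_of_mem_closure hb (D.mem_closure_of_mem_Rpos hx) i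
  have h2 := b.repr_nonneg_of_mem_closure hb (D.mem_closure_of_mem_Rpos hneg) i
  rw [map_neg, Finsupp.neg_apply] at h2
  exact hi (by linarith)

lemma reflV_mem_Rpos_of_ne_smul (hβ : β ∈ D.Δ) (hδ : δ ∈ D.Rpos) (hne : ∀ t : ℝ, δ ≠ t • β) :
    D.reflV β (D.base_subset hβ) δ ∈ D.Rpos := by
  obtain ⟨ι, b, hb⟩ := D.exists_basis_range_superset_base
  obtain ⟨j, hj⟩ := hb hβ
  obtain ⟨i, hij, hi⟩ : ∃ i, i ≠ j ∧ b.repr δ i ≠ 0 := by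
    by_contra! h
    refine hne (b.repr δ j) (b.repr.injective ?_)
    ext i
    by_cases hij : i = j <;> simp [← hj, hij, h i]
  have hrepr : b.repr (D.reflV β (D.base_subset hβ) δ) i = b.repr δ i := by
    simp [reflV_apply, ← hj, Ne.symm hij]
  refine D.mem_Rpos_of_repr_pos hb (D.reflV_mem _ (D.mem_R_of_mem_Rpos hδ)) (i := i) ?_
  rw [hrepr]
  exact lt_of_le_of_ne (b.repr_nonneg_of_mem_closure hb (D.mem_closure_of_mem_Rpos hδ) i)
    (Ne.symm hi)

lemma exists_base_pair_neg_of_not_dominant (h : ¬ D.Dominant ν) :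
    ∃ β ∈ D.Δ, D.pair β ν < 0 := by
  by_contra! hΔ
  have hclosure : ∀ y ∈ AddSubmonoid.closure (D.Δ : Set V), 0 ≤ D.pair y ν := by
    intro y hy
    induction hy using AddSubmonoid.closure_induction with
    | mem y hy => exact hΔ y hy
    | zero => simp
    | add y z _ _ hy hz => rw [map_add, LinearMap.add_apply]; exact add_nonneg hy hz
  exact h fun α hα => hclosure α (D.mem_closure_of_mem_Rpos hα)

lemma coroot_mem_Qpos (hx : x ∈ D.Rpos) : D.coroot x ∈ D.Qpos :=
  AddSubmonoid.subset_closure ⟨x, hx, rfl⟩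

lemma exists_coroot_sub_mem_Qpos {q : V'} (hq : q ∈ D.Qpos) {u : V} (h : 0 < D.pair u q) :
    ∃ δ ∈ D.Rpos, 0 < D.pair u (D.coroot δ) ∧ q - D.coroot δ ∈ D.Qpos := by
  induction hq using AddSubmonoid.closure_induction with
  | mem y hy =>
    obtain ⟨δ, hδ, rfl⟩ := hy
    exact ⟨δ, hδ, h, by rw [sub_self]; exact zero_mem _⟩
  | zero => simp at h
  | add y z hy hz ihy ihz =>
    rw [map_add] at h
    by_cases hpos : 0 < D.pair u y
    · obtain ⟨δ, hδ, hu, hrest⟩ := ihy hpos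
      exact ⟨δ, hδ, hu, by rw [add_sub_right_comm]; exact add_mem hrest hz⟩
    · obtain ⟨δ, hδ, hu, hrest⟩ := ihz (by linarith)
      exact ⟨δ, hδ, hu, by rw [add_sub_assoc]; exact add_mem hy hrest⟩

/-- Exchange at a simple root: `δ∨ - β∨ = (s_β δ)∨ + (⟨β, δ∨⟩ - 1) β∨`. -/
lemma coroot_sub_coroot_mem_Qpos (hβ : β ∈ D.Δ) (hδ : δ ∈ D.Rpos) (hne : ∀ t : ℝ, δ ≠ t • β)
    (hpos : 0 < D.pair β (D.coroot δ)) : D.coroot δ - D.coroot β ∈ D.Qpos := by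
  have hβR := D.base_subset hβ
  obtain ⟨n, hn⟩ := D.crystallographic β hβR δ (D.mem_R_of_mem_Rpos hδ)
  have hn1 : 1 ≤ n := by exact_mod_cast hn ▸ one_le_of_isInt_of_pos ⟨n, hn⟩ hpos
  have hsplit : D.coroot δ - D.coroot β
      = D.coroot (D.reflV β hβR δ) + ((n - 1 : ℤ) : ℝ) • D.coroot β := by
    rw [D.coroot_reflV hβR (D.mem_R_of_mem_Rpos hδ), reflV'_apply, hn]
    push_cast
    module
  rw [hsplit]
  exact add_mem (D.coroot_mem_Qpos (D.reflV_mem_Rpos_of_ne_smul hβ hδ hne))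
    (D.Qpos.intCast_smul_mem (D.coroot_mem_Qpos (D.mem_Rpos_of_mem_base hβ)) (by omega))

lemma exists_pair_le_neg_one_and_leQ_add_coroot (hμ : D.Dominant μ) (hν : ν ∈ D.X)
    (hle : D.leQ ν μ) (hnd : ¬ D.Dominant ν) :
    ∃ x ∈ D.Rpos, D.pair x ν ≤ -1 ∧ D.leQ (ν + D.coroot x) μ := by
  obtain ⟨β, hβΔ, hβν⟩ := D.exists_base_pair_neg_of_not_dominant hnd
  have hβ := D.mem_Rpos_of_mem_base hβΔ
  have hβR := D.base_subset hβΔ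
  have hpos : 0 < D.pair β (μ - ν) := by rw [map_sub]; linarith [hμ β hβ]
  obtain ⟨δ, hδ, hβδ, hrest⟩ := D.exists_coroot_sub_mem_Qpos hle hpos
  have hδR := D.mem_R_of_mem_Rpos hδ
  have hsplit : ∀ c, μ - (ν + c) = (μ - ν - D.coroot δ) + (D.coroot δ - c) := fun c => by abel
  by_cases hδν : D.pair δ ν ≤ -1
  · refine ⟨δ, hδ, hδν, ?_⟩
    rw [leQ, hsplit, sub_self, add_zero]
    exact hrest
  refine ⟨β, hβ, le_neg_one_of_isInt_of_neg (D.pair_X_int β hβR ν hν) hβν, ?_⟩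
  have hne : ∀ t : ℝ, δ ≠ t • β := by
    rintro t rfl
    have ht := D.pair_coroot_pos_comm hβR hδR hβδ
    rw [map_smul, LinearMap.smul_apply, smul_eq_mul, D.pair_self_eq_two β hβR] at ht
    refine hδν (le_neg_one_of_isInt_of_neg (D.pair_X_int _ hδR ν hν) ?_)
    rw [map_smul, LinearMap.smul_apply, smul_eq_mul]
    nlinarith
  rw [leQ, hsplit]
  exact add_mem hrest (D.coroot_sub_coroot_mem_Qpos hβΔ hδ hne hβδ)

lemma pair_rho (y : V') : D.pair D.rho y = 2⁻¹ * ∑ δ ∈ D.Rpos, D.pair δ y := by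
  simp [rho, map_sum, LinearMap.sum_apply]

lemma one_le_pair_coroot_of_reflV_not_mem_Rpos (hx : x ∈ D.Rpos) (hδ : δ ∈ D.Rpos)
    (h : D.reflV x (D.mem_R_of_mem_Rpos hx) δ ∉ D.Rpos) : 1 ≤ D.pair δ (D.coroot x) := by
  have hxR := D.mem_R_of_mem_Rpos hx
  obtain ⟨n, hn⟩ := D.crystallographic δ (D.mem_R_of_mem_Rpos hδ) x hxR
  by_contra! hlt
  have hn0 : n < 1 := by exact_mod_cast hn ▸ hlt
  refine h (D.mem_Rpos.mpr ⟨D.reflV_mem hxR (D.mem_R_of_mem_Rpos hδ), ?_⟩)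
  have hrefl : D.reflV x hxR δ = δ + ((-n : ℤ) : ℝ) • x := by
    rw [reflV_apply, hn]
    push_cast
    module
  rw [hrefl]
  exact add_mem (D.mem_closure_of_mem_Rpos hδ)
    (AddSubmonoid.intCast_smul_mem _ (D.mem_closure_of_mem_Rpos hx) (by omega))

/-- `s_x` pairs off the positive roots it keeps positive with opposite values of `⟨·, x∨⟩`;
each remaining one, `x` among them, contributes at least `1`. -/
lemma one_le_pair_rho_coroot (hx : x ∈ D.Rpos) : 1 ≤ D.pair D.rho (D.coroot x) := by
  have hxR := D.mem_R_of_mem_Rpos hx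
  have hx2 := D.pair_self_eq_two x hxR
  set s := D.reflV x hxR
  have hsum := Finset.sum_filter_add_sum_filter_not D.Rpos (fun δ => s δ ∈ D.Rpos)
    (fun δ => D.pair δ (D.coroot x))
  have hkept : ∑ δ ∈ D.Rpos.filter (fun δ => s δ ∈ D.Rpos), D.pair δ (D.coroot x) = 0 := by
    refine Finset.sum_involution (fun δ _ => s δ) (fun δ _ => ?_) (fun δ _ hδ hfix => ?_)
      (fun δ hδ => ?_) (fun δ _ => D.reflV_reflV hxR δ)
    · simp only [s, reflV_apply, map_sub, map_smul, LinearMap.sub_apply, LinearMap.smul_apply,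
        smul_eq_mul, hx2]
      ring
    · rw [reflV_apply, sub_eq_self, smul_eq_zero] at hfix
      exact hfix.elim hδ (D.root_ne_zero x hxR)
    · rw [Finset.mem_filter] at hδ ⊢
      exact ⟨hδ.2, by rw [D.reflV_reflV]; exact hδ.1⟩
  have hx_mem : x ∈ D.Rpos.filter (fun δ => s δ ∉ D.Rpos) := by
    refine Finset.mem_filter.mpr ⟨hx, ?_⟩
    rw [show s x = -x from Module.reflection_apply_self _]
    exact D.neg_not_mem_Rpos hx
  have hrest : 2 ≤ ∑ δ ∈ D.Rpos.filter (fun δ => s δ ∉ D.Rpos), D.pair δ (D.coroot x) := by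
    have hge : ∀ δ ∈ D.Rpos.filter (fun δ => s δ ∉ D.Rpos), 0 ≤ D.pair δ (D.coroot x) :=
      fun δ hδ => zero_le_one.trans ((Finset.mem_filter.mp hδ).elim
        (D.one_le_pair_coroot_of_reflV_not_mem_Rpos hx))
    exact hx2 ▸ Finset.single_le_sum hge hx_mem
  rw [pair_rho]
  linarith

lemma four_mul_pair_rho_le (y : V') :
    4 * D.pair D.rho y ≤ D.Rpos.card + D.corootForm y y := by
  have hsq : ∑ δ ∈ D.Rpos, D.pair δ y * D.pair δ y ≤ D.corootForm y y := by
    rw [sqForm_apply]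
    exact Finset.sum_le_sum_of_subset_of_nonneg (Finset.filter_subset _ _)
      fun δ _ _ => mul_self_nonneg _
  have hamgm : ∑ δ ∈ D.Rpos, 2 * D.pair δ y ≤ ∑ δ ∈ D.Rpos, (1 + D.pair δ y * D.pair δ y) :=
    Finset.sum_le_sum fun δ _ => by nlinarith [sq_nonneg (D.pair δ y - 1)]
  rw [← Finset.mul_sum, Finset.sum_add_distrib, Finset.sum_const, nsmul_one] at hamgm
  rw [pair_rho]
  linarith

lemma eq_zero_or_one_le_pair_rho {q : V'} (hq : q ∈ D.Qpos) : q = 0 ∨ 1 ≤ D.pair D.rho q := by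
  induction hq using AddSubmonoid.closure_induction with
  | mem y hy =>
    obtain ⟨x, hx, rfl⟩ := hy
    exact Or.inr (D.one_le_pair_rho_coroot hx)
  | zero => exact Or.inl rfl
  | add y z _ _ hy hz =>
    rcases hy with rfl | hy
    · simpa using hz
    rcases hz with rfl | hz
    · simpa using Or.inr hy
    exact Or.inr (by rw [map_add]; linarith)

lemma corootForm_nonneg_of_mem_Qpos (hμ : D.Dominant μ) {q : V'} (hq : q ∈ D.Qpos) :
    0 ≤ D.corootForm μ q := by
  induction hq using AddSubmonoid.closure_induction with
  | mem y hy =>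
    obtain ⟨x, hx, rfl⟩ := hy
    have hxR := D.mem_R_of_mem_Rpos hx
    have := D.pair_mul_corootForm hxR μ
    nlinarith [hμ x hx, D.four_le_corootForm_coroot hxR]
  | zero => simp
  | add y z _ _ hy hz => rw [map_add]; exact add_nonneg hy hz

lemma corootForm_add_coroot (hx : x ∈ D.R) (y : V') :
    D.corootForm (y + D.coroot x) (y + D.coroot x)
      = D.corootForm y y + (D.pair x y + 1) * D.corootForm (D.coroot x) (D.coroot x) := by
  have := D.pair_mul_corootForm hx y
  simp only [map_add, LinearMap.add_apply, D.corootForm_comm (D.coroot x) y]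
  linarith

lemma leQ_refl (ν : V') : D.leQ ν ν := by
  rw [leQ, sub_self]
  exact zero_mem _

lemma leQ_trans {ν₁ ν₂ ν₃ : V'} (h₁₂ : D.leQ ν₁ ν₂) (h₂₃ : D.leQ ν₂ ν₃) : D.leQ ν₁ ν₃ := by
  rw [leQ, ← sub_add_sub_cancel ν₃ ν₂]
  exact add_mem h₂₃ h₁₂

lemma exists_ascent_step (hμ : D.Dominant μ) (hν : ν ∈ D.X) (hle : D.leQ ν μ)
    (hnd : ¬ D.Dominant ν) :
    ∃ ν' ∈ D.X, D.leQ ν ν' ∧ D.leQ ν' μ ∧ D.corootForm ν' ν' ≤ D.corootForm ν ν ∧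
      D.pair D.rho ν + 1 ≤ D.pair D.rho ν' := by
  obtain ⟨x, hx, hxν, hle'⟩ := D.exists_pair_le_neg_one_and_leQ_add_coroot hμ hν hle hnd
  have hxR := D.mem_R_of_mem_Rpos hx
  refine ⟨ν + D.coroot x, add_mem hν (D.coroot_mem_X x hxR), ?_, hle', ?_, ?_⟩
  · rw [leQ, add_sub_cancel_left]
    exact D.coroot_mem_Qpos hx
  · rw [D.corootForm_add_coroot hxR]
    nlinarith [D.four_le_corootForm_coroot hxR]
  · rw [map_add]
    linarith [D.one_le_pair_rho_coroot hx]

lemma exists_dominant_between_of_fuel (hμ : D.Dominant μ) (B : ℝ) (n : ℕ) (hν : ν ∈ D.X)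
    (hle : D.leQ ν μ) (hB : D.corootForm ν ν ≤ B)
    (hfuel : D.Rpos.card + B ≤ 4 * (D.pair D.rho ν + n)) :
    ∃ lam ∈ D.X, D.Dominant lam ∧ D.leQ ν lam ∧ D.leQ lam μ ∧ D.corootForm lam lam ≤ B := by
  induction n generalizing ν with
  | zero =>
    by_cases hd : D.Dominant ν
    · exact ⟨ν, hν, hd, D.leQ_refl ν, hle, hB⟩
    obtain ⟨ν', -, -, -, hB', hρ⟩ := D.exists_ascent_step hμ hν hle hd
    have := D.four_mul_pair_rho_le ν'
    push_cast at hfuel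
    linarith
  | succ n ih =>
    by_cases hd : D.Dominant ν
    · exact ⟨ν, hν, hd, D.leQ_refl ν, hle, hB⟩
    obtain ⟨ν', hν'X, hνν', hle', hB', hρ⟩ := D.exists_ascent_step hμ hν hle hd
    obtain ⟨lam, hlX, hldom, hν'l, hlμ, hlB⟩ :=
      ih hν'X hle' (hB'.trans hB) (by push_cast at hfuel; linarith)
    exact ⟨lam, hlX, hldom, D.leQ_trans hνν' hν'l, hlμ, hlB⟩

lemma exists_dominant_between (hμ : D.Dominant μ) (hν : ν ∈ D.X) (hle : D.leQ ν μ) :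
    ∃ lam ∈ D.X, D.Dominant lam ∧ D.leQ ν lam ∧ D.leQ lam μ ∧
      D.corootForm lam lam ≤ D.corootForm ν ν := by
  obtain ⟨n, hn⟩ := exists_nat_ge ((D.Rpos.card + D.corootForm ν ν) / 4 - D.pair D.rho ν)
  exact D.exists_dominant_between_of_fuel hμ _ n hν hle le_rfl (by linarith)

lemma eq_coroot_of_coroot_sub_mem_Qpos (hμ : D.Dominant μ) (hγ : γ ∈ D.R)
    (h2 : 2 ≤ D.pair γ μ) (h : D.coroot γ - μ ∈ D.Qpos) : μ = D.coroot γ := by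
  have hki := D.pair_mul_corootForm hγ μ
  have hb := D.four_le_corootForm_coroot hγ
  have hμq := D.corootForm_nonneg_of_mem_Qpos hμ h
  rw [map_sub, D.corootForm_comm μ] at hμq
  rw [D.corootForm_comm μ] at hki
  have hqq : D.corootForm (D.coroot γ - μ) (D.coroot γ - μ) = 0 := by
    refine le_antisymm ?_ (sqForm_self_nonneg _ _ _)
    simp only [map_sub, LinearMap.sub_apply, D.corootForm_comm μ (D.coroot γ)]
    nlinarith
  have hρ : D.pair D.rho (D.coroot γ - μ) = 0 := by
    rw [pair_rho, Finset.sum_eq_zero fun δ hδ =>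
      apply_eq_zero_of_sqForm_self_eq_zero _ _ hqq (D.mem_R_of_mem_Rpos hδ), mul_zero]
  rcases D.eq_zero_or_one_le_pair_rho h with h0 | h1
  · exact (sub_eq_zero.mp h0).symm
  · linarith

lemma eq_coroot_of_mem_MSet (hμ : μ ∈ D.MSet) (hγ : γ ∈ D.R) (h2 : 2 ≤ D.pair γ μ) :
    μ = D.coroot γ := by
  obtain ⟨⟨hμX, hdom⟩, -, hmin⟩ := hμ
  have hν₀ : D.leQ (μ - D.coroot γ) μ := by
    rw [leQ, sub_sub_cancel]
    exact D.coroot_mem_Qpos (D.mem_Rpos_of_pair_pos hdom hγ (by linarith))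
  obtain ⟨lam, hlX, hldom, hνl, hlμ, hlB⟩ :=
    D.exists_dominant_between hdom (sub_mem hμX (D.coroot_mem_X γ hγ)) hν₀
  by_cases hl0 : lam = 0
  · subst hl0
    refine D.eq_coroot_of_coroot_sub_mem_Qpos hdom hγ h2 ?_
    simpa [leQ] using hνl
  -- otherwise minimality gives `lam = μ`, although the norm has strictly dropped
  obtain rfl := hmin lam ⟨hlX, hldom⟩ hl0 hlμ
  have hki := D.pair_mul_corootForm hγ lam
  simp only [map_sub, LinearMap.sub_apply, D.corootForm_comm (D.coroot γ) lam] at hlB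
  nlinarith [D.four_le_corootForm_coroot hγ]

lemma linked_symm (h : D.Linked α β) : D.Linked β α :=
  ⟨h.2.1, h.1, D.pair_coroot_ne_zero_comm h.1 h.2.1 h.2.2⟩

/-- The witness for `z` is `y`, `w` or `s_w y`. -/
lemma exists_pair_ne_zero_of_linked (ν : V') {w : V} (hzw : D.Linked z w)
    (h : ∃ y ∈ D.R, D.pair y ν ≠ 0 ∧ D.pair w (D.coroot y) ≠ 0) :
    ∃ y ∈ D.R, D.pair y ν ≠ 0 ∧ D.pair z (D.coroot y) ≠ 0 := by
  obtain ⟨-, hw, hzw⟩ := hzw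
  obtain ⟨y, hy, hyν, hwy⟩ := h
  obtain hzy | hzy := ne_or_eq (D.pair z (D.coroot y)) 0
  · exact ⟨y, hy, hyν, hzy⟩
  obtain hwν | hwν := ne_or_eq (D.pair w ν) 0
  · exact ⟨w, hw, hwν, hzw⟩
  refine ⟨D.reflV w hw y, D.reflV_mem hw hy, ?_, ?_⟩
  · rwa [reflV_apply, map_sub, map_smul, LinearMap.sub_apply, LinearMap.smul_apply, hwν,
      smul_zero, sub_zero]
  · rw [D.coroot_reflV hw hy, reflV'_apply, map_sub, map_smul, hzy, smul_eq_mul, zero_sub,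
      neg_ne_zero]
    exact mul_ne_zero hwy hzw

lemma exists_pair_ne_zero_iff_of_sameComponent (ν : V') (h : D.SameComponent α β) :
    (∃ y ∈ D.R, D.pair y ν ≠ 0 ∧ D.pair α (D.coroot y) ≠ 0) ↔
      ∃ y ∈ D.R, D.pair y ν ≠ 0 ∧ D.pair β (D.coroot y) ≠ 0 := by
  induction h with
  | rel a b hab =>
    exact ⟨D.exists_pair_ne_zero_of_linked ν (D.linked_symm hab),
      D.exists_pair_ne_zero_of_linked ν hab⟩
  | refl => rfl
  | symm _ _ _ ih => exact ih.symm
  | trans _ _ _ _ _ ih₁ ih₂ => exact ih₁.trans ih₂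

section HighestRoot

variable (hγ : γ ∈ D.R) (hdom : D.Dominant (D.coroot γ))
include hγ hdom

lemma mem_Rpos_and_sub_mem_Rpos_of_pair_eq_one (hz : z ∈ D.R)
    (h1 : D.pair z (D.coroot γ) = 1) : z ∈ D.Rpos ∧ γ - z ∈ D.Rpos := by
  have hγγ := D.pair_self_eq_two γ hγ
  have hne : z ≠ γ := by rintro rfl; linarith
  have hzγ := D.sub_mem_of_pair_coroot_pos hz hγ hne (by linarith)
  have hneg := D.mem_Rpos_of_pair_pos hdom (D.neg_mem _ hzγ)
    (by rw [map_neg, map_sub, LinearMap.neg_apply, LinearMap.sub_apply]; linarith)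
  rw [neg_sub] at hneg
  exact ⟨D.mem_Rpos_of_pair_pos hdom hz (by linarith), hneg⟩

variable (huniq : ∀ z ∈ D.R, 2 ≤ D.pair z (D.coroot γ) → z = γ)
include huniq

lemma sub_mem_closure_of_pair_ne_zero (hz : z ∈ D.R) (h : D.pair z (D.coroot γ) ≠ 0) :
    γ - z ∈ AddSubmonoid.closure (D.Δ : Set V) := by
  obtain ⟨n, hn⟩ := D.crystallographic z hz γ hγ
  have hn0 : n ≠ 0 := by rintro rfl; exact h (by simp [hn])
  rcases (by omega : 2 ≤ n ∨ n = 1 ∨ n = -1 ∨ n ≤ -2) with hn2 | rfl | rfl | hn2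
  · rw [huniq z hz (by rw [hn]; exact_mod_cast hn2), sub_self]
    exact zero_mem _
  · exact D.mem_closure_of_mem_Rpos
      (D.mem_Rpos_and_sub_mem_Rpos_of_pair_eq_one hγ hdom hz (by simp [hn])).2
  · obtain ⟨h₁, h₂⟩ := D.mem_Rpos_and_sub_mem_Rpos_of_pair_eq_one hγ hdom (D.neg_mem z hz)
      (by simp [hn])
    rw [show γ - z = (γ - -z) + -z + -z by abel]
    exact add_mem (add_mem (D.mem_closure_of_mem_Rpos h₂) (D.mem_closure_of_mem_Rpos h₁))
      (D.mem_closure_of_mem_Rpos h₁)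
  · have hzγ : -z = γ := huniq _ (D.neg_mem z hz) (by
      rw [map_neg, LinearMap.neg_apply, hn]
      have : (n : ℝ) ≤ -2 := by exact_mod_cast hn2
      linarith)
    have hγ' := D.mem_closure_of_mem_Rpos
      (D.mem_Rpos_of_pair_pos hdom hγ (by rw [D.pair_self_eq_two γ hγ]; norm_num))
    rw [← neg_neg z, hzγ, sub_neg_eq_add]
    exact add_mem hγ' hγ'

lemma sub_mem_closure_of_pair_eq_zero (hz : z ∈ D.R) (h0 : D.pair z (D.coroot γ) = 0) {y : V}
    (hy : y ∈ D.R) (hyγ : D.pair y (D.coroot γ) ≠ 0) (hzy : D.pair z (D.coroot y) ≠ 0) :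
    γ - z ∈ AddSubmonoid.closure (D.Δ : Set V) := by
  wlog hpos : 0 < D.pair y (D.coroot γ) generalizing y
  · refine this (D.neg_mem y hy) (by simpa using hyγ) (by simpa [D.coroot_neg y hy] using hzy) ?_
    rw [map_neg, LinearMap.neg_apply]
    exact neg_pos.mpr (lt_of_le_of_ne (not_lt.mp hpos) hyγ)
  have hy1 : D.pair y (D.coroot γ) = 1 := by
    obtain ⟨n, hn⟩ := D.crystallographic y hy γ hγ
    have hn1 : 1 ≤ n := by exact_mod_cast hn ▸ one_le_of_isInt_of_pos ⟨n, hn⟩ hpos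
    rcases (by omega : n = 1 ∨ 2 ≤ n) with rfl | hn2
    · simp [hn]
    · have := huniq y hy (by rw [hn]; exact_mod_cast hn2)
      subst this
      exact absurd h0 hzy
  obtain ⟨hyp, hγy⟩ := D.mem_Rpos_and_sub_mem_Rpos_of_pair_eq_one hγ hdom hy hy1
  rcases lt_or_gt_of_ne hzy with hneg | hpos'
  · have hne : z ≠ -y := by rintro rfl; simp [hy1] at h0
    have hzyR := D.add_mem_of_pair_coroot_neg hz hy hne hneg
    have := (D.mem_Rpos_and_sub_mem_Rpos_of_pair_eq_one hγ hdom hzyR (by simp [h0, hy1])).2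
    rw [show γ - z = (γ - (z + y)) + y by abel]
    exact add_mem (D.mem_closure_of_mem_Rpos this) (D.mem_closure_of_mem_Rpos hyp)
  · have hne : y ≠ z := by rintro rfl; simp [hy1] at h0
    have hyz := D.sub_mem_of_pair_coroot_pos hy hz hne (D.pair_coroot_pos_comm hz hy hpos')
    have := (D.mem_Rpos_and_sub_mem_Rpos_of_pair_eq_one hγ hdom hyz (by simp [h0, hy1])).1
    rw [show γ - z = (γ - y) + (y - z) by abel]
    exact add_mem (D.mem_closure_of_mem_Rpos hγy) (D.mem_closure_of_mem_Rpos this)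

end HighestRoot

end RootSystemData

theorem quasiminuscule_root_is_highest {V V' : Type} [AddCommGroup V] [Module ℝ V] [FiniteDimensional ℝ V]
    [AddCommGroup V'] [Module ℝ V'] [FiniteDimensional ℝ V']
    (D : RootSystemData V V')
    (μ : V') (hμ : μ ∈ D.MSet) (γ : V) (hγ : γ ∈ D.R)
    (h2 : 2 ≤ D.pair γ μ) :
    γ ∈ D.Rpos ∧ (∀ α ∈ D.Rpos, 0 ≤ D.pair γ (D.coroot α)) ∧
      ∀ α ∈ D.R, D.SameComponent α γ →
        γ - α ∈ AddSubmonoid.closure (D.Δ : Set V) := by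
  have hμγ : μ = D.coroot γ := D.eq_coroot_of_mem_MSet hμ hγ h2
  have hdom : D.Dominant (D.coroot γ) := hμγ ▸ hμ.1.2
  have huniq : ∀ z ∈ D.R, 2 ≤ D.pair z (D.coroot γ) → z = γ := fun z hz hz2 =>
    D.coroot_injOn hz hγ ((D.eq_coroot_of_mem_MSet hμ hz (hμγ ▸ hz2)).symm.trans hμγ)
  have hγγ : D.pair γ (D.coroot γ) = 2 := D.pair_self_eq_two γ hγ
  refine ⟨D.mem_Rpos_of_pair_pos hdom hγ (by linarith),
    fun α hα => D.pair_coroot_nonneg_comm (D.mem_R_of_mem_Rpos hα) hγ (hdom α hα), ?_⟩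
  intro α hα hcomp
  obtain ⟨y, hy, hyγ, hαy⟩ := (D.exists_pair_ne_zero_iff_of_sameComponent (D.coroot γ) hcomp).mpr
    ⟨γ, hγ, by linarith, by linarith⟩
  by_cases hαγ : D.pair α (D.coroot γ) = 0
  · exact D.sub_mem_closure_of_pair_eq_zero hγ hdom huniq hα hαγ hy hyγ hαy
  · exact D.sub_mem_closure_of_pair_ne_zero hγ hdom huniq hα hαγ

end
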